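/- For every v ≥ 0 and integer ℓ ≥ 1, let a_ℓ(v) ∈ [ℓw, 4ℓ] be the unique minimizer of a ↦ −v·a + G²_ℓ(a) on [ℓw, 4ℓ], and set b_ℓ(v) := a_ℓ(v)/ℓ. Then for all integers m > ℓ ≥ 1 and every v ≥ 0: a_m(v) > a_ℓ(v) and b_m(v) ≤ b_ℓ(v). -/
import Mathlib


/-- Surface tension of the type-2 stack of `ℓ` layers and area `a`:
`τ²_ℓ(a) = 8ℓ − 2√((4ℓ−a)(4−w)ℓ)`. -/
noncomputable def tau2 (w : ℝ) (ℓ : ℕ) (a : ℝ) : ℝ :=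
  8 * (ℓ : ℝ) - 2 * Real.sqrt ((4 * (ℓ : ℝ) - a) * ((4 - w) * (ℓ : ℝ)))

/-- `G²_ℓ(a) = τ²_ℓ(a) + a²/(2σ)` (the finite branch, relevant on `[ℓw, 4ℓ]`). -/
noncomputable def G2 (w σ : ℝ) (ℓ : ℕ) (a : ℝ) : ℝ :=
  tau2 w ℓ a + a ^ 2 / (2 * σ)

private lemma sqrt_mul_factor (w N b : ℝ) (hw : w ≤ 4) :
    Real.sqrt ((4 * N - b) * ((4 - w) * N))
      = Real.sqrt (4 - w) * Real.sqrt (N * (4 * N - b)) := by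
  rw [show (4 * N - b) * ((4 - w) * N) = (4 - w) * (N * (4 * N - b)) by ring,
    Real.sqrt_mul (by linarith)]

private lemma sqrt_exchange {L M x y : ℝ} (hL : 0 < L) (hLM : L < M)
    (hx : 0 < x) (hxy : x < y) (hy : y ≤ 4 * L) :
    Real.sqrt (M * (4 * M - x)) + Real.sqrt (L * (4 * L - y)) <
      Real.sqrt (M * (4 * M - y)) + Real.sqrt (L * (4 * L - x)) := by
  have hM : 0 < M := hL.trans hLM
  have hyM : y ≤ 4 * M := by nlinarith
  have h4Ly : 0 ≤ 4 * L - y := by linarith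
  have h4Lx : 0 < 4 * L - x := by linarith
  have h4My : 0 ≤ 4 * M - y := by linarith
  have h4Mx : 0 < 4 * M - x := by linarith
  set p := Real.sqrt (M * (4 * M - x)) with hpdef
  set q := Real.sqrt (M * (4 * M - y)) with hqdef
  set r := Real.sqrt (L * (4 * L - x)) with hrdef
  set s := Real.sqrt (L * (4 * L - y)) with hsdef
  have hp2 : p ^ 2 = M * (4 * M - x) := Real.sq_sqrt (mul_nonneg hM.le h4Mx.le)
  have hq2 : q ^ 2 = M * (4 * M - y) := Real.sq_sqrt (mul_nonneg hM.le h4My)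
  have hr2 : r ^ 2 = L * (4 * L - x) := Real.sq_sqrt (mul_nonneg hL.le h4Lx.le)
  have hs2 : s ^ 2 = L * (4 * L - y) := Real.sq_sqrt (mul_nonneg hL.le h4Ly)
  have hppos : 0 < p := Real.sqrt_pos.2 (mul_pos hM h4Mx)
  have hrpos : 0 < r := Real.sqrt_pos.2 (mul_pos hL h4Lx)
  have hqnn : 0 ≤ q := Real.sqrt_nonneg _
  have hsnn : 0 ≤ s := Real.sqrt_nonneg _
  have hpq : 0 < p + q := by linarith
  have hrs : 0 < r + s := by linarith
  have hLMnn : (0:ℝ) ≤ L * M := (mul_pos hL hM).le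
  have key1 : M * r < L * p := by
    have e1 : Real.sqrt (L * M) * Real.sqrt (M * (4 * L - x)) = M * r := by
      rw [hrdef, ← Real.sqrt_mul hLMnn (M * (4 * L - x)),
        show L * M * (M * (4 * L - x)) = M ^ 2 * (L * (4 * L - x)) by ring,
        Real.sqrt_mul (sq_nonneg M), Real.sqrt_sq hM.le]
    have e2 : Real.sqrt (L * M) * Real.sqrt (L * (4 * M - x)) = L * p := by
      rw [hpdef, ← Real.sqrt_mul hLMnn (L * (4 * M - x)),
        show L * M * (L * (4 * M - x)) = L ^ 2 * (M * (4 * M - x)) by ring,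
        Real.sqrt_mul (sq_nonneg L), Real.sqrt_sq hL.le]
    rw [← e1, ← e2]
    have hlt : Real.sqrt (M * (4 * L - x)) < Real.sqrt (L * (4 * M - x)) := by
      apply Real.sqrt_lt_sqrt (mul_nonneg hM.le h4Lx.le)
      linarith only [mul_lt_mul_of_pos_right hLM hx]
    exact mul_lt_mul_of_pos_left hlt (Real.sqrt_pos.2 (mul_pos hL hM))
  have key2 : M * s ≤ L * q := by
    have e1 : Real.sqrt (L * M) * Real.sqrt (M * (4 * L - y)) = M * s := by
      rw [hsdef, ← Real.sqrt_mul hLMnn (M * (4 * L - y)),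
        show L * M * (M * (4 * L - y)) = M ^ 2 * (L * (4 * L - y)) by ring,
        Real.sqrt_mul (sq_nonneg M), Real.sqrt_sq hM.le]
    have e2 : Real.sqrt (L * M) * Real.sqrt (L * (4 * M - y)) = L * q := by
      rw [hqdef, ← Real.sqrt_mul hLMnn (L * (4 * M - y)),
        show L * M * (L * (4 * M - y)) = L ^ 2 * (M * (4 * M - y)) by ring,
        Real.sqrt_mul (sq_nonneg L), Real.sqrt_sq hL.le]
    rw [← e1, ← e2]
    apply mul_le_mul_of_nonneg_left _ (Real.sqrt_nonneg _)
    apply Real.sqrt_le_sqrt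
    linarith only [mul_le_mul_of_nonneg_right hLM.le (le_of_lt (hx.trans hxy))]
  have hMrs : M * (r + s) < L * (p + q) := by linarith only [key1, key2]
  have h1 : (p - q) * ((p + q) * (r + s)) = (y - x) * (M * (r + s)) := by
    linear_combination (r + s) * hp2 - (r + s) * hq2
  have h2 : (r - s) * ((p + q) * (r + s)) = (y - x) * (L * (p + q)) := by
    linear_combination (p + q) * hr2 - (p + q) * hs2
  have h3 : (p - q) * ((p + q) * (r + s)) < (r - s) * ((p + q) * (r + s)) := by
    rw [h1, h2]
    exact mul_lt_mul_of_pos_left hMrs (by linarith)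
  have h4 : p - q < r - s := lt_of_mul_lt_mul_right h3 (mul_pos hpq hrs).le
  linarith

set_option maxHeartbeats 2000000 in
private lemma main_real (w σ L M v A B : ℝ)
    (hw0 : 0 < w) (hw4 : w < 4) (hσ : 0 < σ)
    (hL1 : 1 ≤ L) (hLM1 : L + 1 ≤ M) (hv : 0 ≤ v)
    (hA1 : L * w ≤ A) (hA2 : A ≤ 4 * L) (hB1 : M * w ≤ B) (hB2 : B ≤ 4 * M)
    (hAmin : ∀ b : ℝ, L * w ≤ b → b ≤ 4 * L →
      -v * A + (8 * L - 2 * Real.sqrt ((4 * L - A) * ((4 - w) * L)) + A ^ 2 / (2 * σ)) ≤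
      -v * b + (8 * L - 2 * Real.sqrt ((4 * L - b) * ((4 - w) * L)) + b ^ 2 / (2 * σ)))
    (hBmin : ∀ b : ℝ, M * w ≤ b → b ≤ 4 * M →
      -v * B + (8 * M - 2 * Real.sqrt ((4 * M - B) * ((4 - w) * M)) + B ^ 2 / (2 * σ)) ≤
      -v * b + (8 * M - 2 * Real.sqrt ((4 * M - b) * ((4 - w) * M)) + b ^ 2 / (2 * σ))) :
    A < B ∧ B / M ≤ A / L := by
  have hL : 0 < L := by linarith
  have hM : 0 < M := by linarith
  have hLM : L < M := by linarith
  have hw4' : (0:ℝ) < 4 - w := by linarith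
  have hMw : L * w < M * w := mul_lt_mul_of_pos_right hLM hw0
  have hLwpos : 0 < L * w := mul_pos hL hw0
  have hMwpos : 0 < M * w := mul_pos hM hw0
  have hApos : 0 < A := lt_of_lt_of_le hLwpos hA1
  have hBpos : 0 < B := lt_of_lt_of_le hMwpos hB1
  have hK : 0 < Real.sqrt (4 - w) := Real.sqrt_pos.2 hw4'
  constructor
  · rcases lt_trichotomy B A with hBA | hBA | hBA
    · exfalso
      have i1 := hAmin B (by linarith) (by linarith)
      have i2 := hBmin A (by linarith) (by linarith)
      rw [sqrt_mul_factor w L A hw4.le, sqrt_mul_factor w L B hw4.le] at i1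
      rw [sqrt_mul_factor w M A hw4.le, sqrt_mul_factor w M B hw4.le] at i2
      have hex := sqrt_exchange hL hLM hBpos hBA hA2
      have hexK := mul_lt_mul_of_pos_left hex hK
      linarith only [hexK, i1, i2]
    · exfalso
      subst hBA
      have hD : 0 < B * (M - L) := mul_pos hApos (by linarith)
      obtain ⟨ε, hε, hεw, hεD, hεσ⟩ : ∃ ε : ℝ, 0 < ε ∧ ε ≤ w ∧
          ε * (2 * (L + M)) ≤ B * (M - L) ∧
          ε * (120 * (L * M)) ≤ σ * Real.sqrt (4 - w) * (B * (M - L)) := by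
        refine ⟨min w (min (B * (M - L) / (2 * (L + M)))
          (σ * Real.sqrt (4 - w) * (B * (M - L)) / (120 * (L * M)))), ?_, min_le_left _ _, ?_, ?_⟩
        · exact lt_min hw0 (lt_min (div_pos hD (by linarith))
            (div_pos (mul_pos (mul_pos hσ hK) hD) (by positivity)))
        · exact (le_div_iff₀ (by linarith)).1 ((min_le_right _ _).trans (min_le_left _ _))
        · exact (le_div_iff₀ (by positivity)).1 ((min_le_right _ _).trans (min_le_right _ _))
      have hLw1 : (L + 1) * w ≤ M * w := mul_le_mul_of_nonneg_right hLM1 hw0.le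
      have i1 := hAmin (B - ε) (by nlinarith) (by linarith)
      have i2 := hBmin (B + ε) (by linarith) (by linarith)
      rw [sqrt_mul_factor w L B hw4.le, sqrt_mul_factor w L (B - ε) hw4.le] at i1
      rw [sqrt_mul_factor w M B hw4.le, sqrt_mul_factor w M (B + ε) hw4.le] at i2
      set K := Real.sqrt (4 - w) with hKdef
      set u1 := Real.sqrt (L * (4 * L - B)) with hu1def
      set u2 := Real.sqrt (L * (4 * L - (B - ε))) with hu2def
      set t2 := Real.sqrt (M * (4 * M - B)) with ht2def
      set t1 := Real.sqrt (M * (4 * M - (B + ε))) with ht1def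
      have hu1nn : 0 ≤ u1 := Real.sqrt_nonneg _
      have ht2nn : 0 ≤ t2 := Real.sqrt_nonneg _
      have hu1sq : u1 ^ 2 = L * (4 * L - B) := Real.sq_sqrt (mul_nonneg hL.le (by linarith))
      have hu2sq : u2 ^ 2 = L * (4 * L - (B - ε)) :=
        Real.sq_sqrt (mul_nonneg hL.le (by linarith))
      have ht2sq : t2 ^ 2 = M * (4 * M - B) := Real.sq_sqrt (mul_nonneg hM.le (by linarith))
      have ht1sq : t1 ^ 2 = M * (4 * M - (B + ε)) :=
        Real.sq_sqrt (mul_nonneg hM.le (by linarith))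
      have hu12 : u1 ≤ u2 :=
        Real.sqrt_le_sqrt (mul_le_mul_of_nonneg_left (by linarith) hL.le)
      have ht12 : t1 ≤ t2 :=
        Real.sqrt_le_sqrt (mul_le_mul_of_nonneg_left (by linarith) hM.le)
      have hu2pos : 0 < u2 := Real.sqrt_pos.2 (mul_pos hL (by linarith))
      have ht1pos : 0 < t1 := Real.sqrt_pos.2 (mul_pos hM (by linarith))
      clear_value K u1 u2 t2 t1
      have h2s : (0:ℝ) < 2 * σ := by linarith
      have hc1 : B ^ 2 / (2 * σ) * (2 * σ) = B ^ 2 := div_mul_cancel₀ _ (ne_of_gt h2s)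
      have hc2 : (B - ε) ^ 2 / (2 * σ) * (2 * σ) = (B - ε) ^ 2 :=
        div_mul_cancel₀ _ (ne_of_gt h2s)
      have hc3 : (B + ε) ^ 2 / (2 * σ) * (2 * σ) = (B + ε) ^ 2 :=
        div_mul_cancel₀ _ (ne_of_gt h2s)
      have i1' := mul_le_mul_of_nonneg_right i1 h2s.le
      have i2' := mul_le_mul_of_nonneg_right i2 h2s.le
      have hsum : (2 * K * u2 - 2 * K * u1) * (2 * σ) ≤
          (2 * K * t2 - 2 * K * t1) * (2 * σ) + 2 * ε ^ 2 := by
        linarith only [i1', i2', hc1, hc2, hc3]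
      have h_u : L * ε ≤ (u2 - u1) * (2 * u2) := by
        linarith only [sq_nonneg (u2 - u1), hu1sq, hu2sq]
      have h_t : (t2 - t1) * (2 * t1) ≤ M * ε := by
        linarith only [sq_nonneg (t2 - t1), ht1sq, ht2sq]
      have hu2b : u2 ≤ 3 * L := by
        rw [hu2def]
        calc Real.sqrt (L * (4 * L - (B - ε))) ≤ Real.sqrt ((3 * L) ^ 2) := by
              apply Real.sqrt_le_sqrt
              linarith only [mul_le_mul_of_nonneg_left
                (show 4 * L - (B - ε) ≤ 9 * L by
                  linarith only [hApos, hεw, hw4, hL1]) hL.le]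
          _ = 3 * L := Real.sqrt_sq (by linarith)
      have ht1b : t1 ≤ 2 * M := by
        rw [ht1def]
        calc Real.sqrt (M * (4 * M - (B + ε))) ≤ Real.sqrt ((2 * M) ^ 2) := by
              apply Real.sqrt_le_sqrt
              linarith only [mul_le_mul_of_nonneg_left
                (show 4 * M - (B + ε) ≤ 4 * M by
                  linarith only [hApos, hε]) hM.le]
          _ = 2 * M := Real.sqrt_sq (by linarith)
      have hsq : (L * t1) ^ 2 - (M * u2) ^ 2 = L * M * (B * (M - L) - ε * (L + M)) := by
        linear_combination L ^ 2 * ht1sq - M ^ 2 * hu2sq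
      have hub : 0 < L * t1 + M * u2 :=
        add_pos (mul_pos hL ht1pos) (mul_pos hM hu2pos)
      have hdiff : L * M * (B * (M - L)) / 2 ≤ (L * t1 - M * u2) * (L * t1 + M * u2) := by
        linarith only [hsq, mul_le_mul_of_nonneg_left hεD (mul_nonneg hL.le hM.le)]
      have hposX : 0 < L * t1 - M * u2 := by
        nlinarith only [hdiff, hub, mul_pos (mul_pos hL hM) hD]
      have hsum5 : L * t1 + M * u2 ≤ 5 * (L * M) := by
        linarith only [mul_le_mul_of_nonneg_left ht1b hL.le,
          mul_le_mul_of_nonneg_left hu2b hM.le]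
      have hgap : B * (M - L) / 10 ≤ L * t1 - M * u2 := by
        nlinarith only [hdiff, mul_le_mul_of_nonneg_left hsum5 hposX.le,
          mul_pos hL hM]
      have hfin : K * t1 * (L * ε) * (2 * σ) ≤
          K * u2 * (M * ε) * (2 * σ) + 2 * ε ^ 2 * (u2 * t1) := by
        linarith only [mul_le_mul_of_nonneg_right hsum (mul_nonneg hu2pos.le ht1pos.le),
          mul_le_mul_of_nonneg_left h_u
            (mul_nonneg (mul_nonneg hK.le ht1pos.le) h2s.le),
          mul_le_mul_of_nonneg_left h_t
            (mul_nonneg (mul_nonneg hK.le hu2pos.le) h2s.le)]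
      have hu2t1 : u2 * t1 ≤ 6 * (L * M) := by
        calc u2 * t1 ≤ (3 * L) * (2 * M) :=
              mul_le_mul hu2b ht1b ht1pos.le (by linarith)
          _ = 6 * (L * M) := by ring
      have hb2 : 2 * ε ^ 2 * (u2 * t1) ≤ 2 * ε ^ 2 * (6 * (L * M)) :=
        mul_le_mul_of_nonneg_left hu2t1 (by positivity)
      have hb3 := mul_le_mul_of_nonneg_right hεσ hε.le
      have hlow := mul_le_mul_of_nonneg_left hgap
        (mul_nonneg (mul_nonneg hK.le hε.le) h2s.le)
      have hεKD : 0 < σ * (K * (ε * (B * (M - L)))) :=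
        mul_pos hσ (mul_pos hK (mul_pos hε hD))
      linarith only [hfin, hb2, hb3, hlow, hεKD]
    · exact hBA
  · have hM0 : M ≠ 0 := ne_of_gt hM
    have hL0 : L ≠ 0 := ne_of_gt hL
    set α := A / L with hαdef
    set β := B / M with hβdef
    clear_value α β
    have hαw : w ≤ α := by rw [hαdef, le_div_iff₀ hL]; linarith
    have hα4 : α ≤ 4 := by rw [hαdef, div_le_iff₀ hL]; linarith
    have hβw : w ≤ β := by rw [hβdef, le_div_iff₀ hM]; linarith
    have hβ4 : β ≤ 4 := by rw [hβdef, div_le_iff₀ hM]; linarith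
    have hAα : L * α = A := by rw [hαdef]; field_simp
    have hBβ : M * β = B := by rw [hβdef]; field_simp
    have i1 := hAmin (L * β) (mul_le_mul_of_nonneg_left hβw hL.le)
      (by nlinarith [mul_le_mul_of_nonneg_left hβ4 hL.le])
    have i2 := hBmin (M * α) (mul_le_mul_of_nonneg_left hαw hM.le)
      (by nlinarith [mul_le_mul_of_nonneg_left hα4 hM.le])
    rw [← hAα] at i1
    rw [← hBβ] at i2
    have eL : ∀ x : ℝ, Real.sqrt (L ^ 2 * x) = L * Real.sqrt x := fun x => by
      rw [Real.sqrt_mul (sq_nonneg L), Real.sqrt_sq hL.le]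
    have eM : ∀ x : ℝ, Real.sqrt (M ^ 2 * x) = M * Real.sqrt x := fun x => by
      rw [Real.sqrt_mul (sq_nonneg M), Real.sqrt_sq hM.le]
    rw [show (4 * L - L * α) * ((4 - w) * L) = L ^ 2 * ((4 - α) * (4 - w)) by ring,
      show (4 * L - L * β) * ((4 - w) * L) = L ^ 2 * ((4 - β) * (4 - w)) by ring,
      eL ((4 - α) * (4 - w)), eL ((4 - β) * (4 - w))] at i1
    rw [show (4 * M - M * β) * ((4 - w) * M) = M ^ 2 * ((4 - β) * (4 - w)) by ring,
      show (4 * M - M * α) * ((4 - w) * M) = M ^ 2 * ((4 - α) * (4 - w)) by ring,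
      eM ((4 - β) * (4 - w)), eM ((4 - α) * (4 - w))] at i2
    set sα := Real.sqrt ((4 - α) * (4 - w)) with hsαdef
    set sβ := Real.sqrt ((4 - β) * (4 - w)) with hsβdef
    clear_value sα sβ
    have h2s : (0:ℝ) < 2 * σ := by linarith
    have c1 : (L * α) ^ 2 / (2 * σ) * (2 * σ) = (L * α) ^ 2 :=
      div_mul_cancel₀ _ (ne_of_gt h2s)
    have c2 : (L * β) ^ 2 / (2 * σ) * (2 * σ) = (L * β) ^ 2 :=
      div_mul_cancel₀ _ (ne_of_gt h2s)
    have c3 : (M * β) ^ 2 / (2 * σ) * (2 * σ) = (M * β) ^ 2 :=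
      div_mul_cancel₀ _ (ne_of_gt h2s)
    have c4 : (M * α) ^ 2 / (2 * σ) * (2 * σ) = (M * α) ^ 2 :=
      div_mul_cancel₀ _ (ne_of_gt h2s)
    have i1c : (-v * (L * α) + 8 * L - 2 * (L * sα)) * (2 * σ) + (L * α) ^ 2 ≤
        (-v * (L * β) + 8 * L - 2 * (L * sβ)) * (2 * σ) + (L * β) ^ 2 := by
      linarith only [mul_le_mul_of_nonneg_right i1 h2s.le, c1, c2]
    have i2c : (-v * (M * β) + 8 * M - 2 * (M * sβ)) * (2 * σ) + (M * β) ^ 2 ≤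
        (-v * (M * α) + 8 * M - 2 * (M * sα)) * (2 * σ) + (M * α) ^ 2 := by
      linarith only [mul_le_mul_of_nonneg_right i2 h2s.le, c3, c4]
    have hstep2 : L ^ 2 * M * α ^ 2 + L * M ^ 2 * β ^ 2 ≤
        L ^ 2 * M * β ^ 2 + L * M ^ 2 * α ^ 2 := by
      linarith only [mul_le_mul_of_nonneg_left i1c hM.le,
        mul_le_mul_of_nonneg_left i2c hL.le]
    have hαpos : 0 < α := lt_of_lt_of_le hw0 hαw
    have hβpos : 0 < β := lt_of_lt_of_le hw0 hβw
    have hsq2 : β ^ 2 ≤ α ^ 2 := by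
      nlinarith only [hstep2, mul_pos (mul_pos hL hM) (show (0:ℝ) < M - L by linarith)]
    nlinarith only [hsq2, hαpos, hβpos]

/-- if, for each integer `ℓ ≥ 1` and each slope `v ≥ 0`, `aF ℓ v` is a
minimizer of `a ↦ −v·a + G²_ℓ(a)` on `[ℓw, 4ℓ]` (this minimizer is unique), and
`bF ℓ v := aF ℓ v / ℓ`, then for all integers `m > ℓ ≥ 1` and every `v ≥ 0` one has
`aF m v > aF ℓ v` and `bF m v ≤ bF ℓ v`. -/
theorem a_monotone_b_antitone (w σ : ℝ) (hw0 : 0 < w) (hw4 : w < 4) (hσ : 0 < σ)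
    (hnd : ∀ n : ℕ, (n : ℝ) ≠ 4 / (4 - w))
    (aF : ℕ → ℝ → ℝ)
    (haF : ∀ ℓ : ℕ, 1 ≤ ℓ → ∀ v : ℝ, 0 ≤ v →
      aF ℓ v ∈ Set.Icc ((ℓ : ℝ) * w) (4 * (ℓ : ℝ)) ∧
      ∀ b ∈ Set.Icc ((ℓ : ℝ) * w) (4 * (ℓ : ℝ)),
        -v * aF ℓ v + G2 w σ ℓ (aF ℓ v) ≤ -v * b + G2 w σ ℓ b) :
    ∀ ℓ m : ℕ, 1 ≤ ℓ → ℓ < m → ∀ v : ℝ, 0 ≤ v →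
      aF ℓ v < aF m v ∧ aF m v / (m : ℝ) ≤ aF ℓ v / (ℓ : ℝ) := by
  intro ℓ m hℓ hlm v hv
  obtain ⟨hmem1, hmin1⟩ := haF ℓ hℓ v hv
  obtain ⟨hmem2, hmin2⟩ := haF m (hℓ.trans hlm.le) v hv
  have hL1 : (1:ℝ) ≤ (ℓ:ℝ) := by exact_mod_cast hℓ
  have hLM1 : (ℓ:ℝ) + 1 ≤ (m:ℝ) := by exact_mod_cast Nat.succ_le_of_lt hlm
  exact main_real w σ (ℓ:ℝ) (m:ℝ) v (aF ℓ v) (aF m v) hw0 hw4 hσ hL1 hLM1 hv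
    hmem1.1 hmem1.2 hmem2.1 hmem2.2
    (fun b hb1 hb2 => by
      have h := hmin1 b ⟨hb1, hb2⟩
      simp only [G2, tau2] at h
      linarith)
    (fun b hb1 hb2 => by
      have h := hmin2 b ⟨hb1, hb2⟩
      simp only [G2, tau2] at h
      linarith)
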